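/- (Quadratic majorization of the smooth hinge loss.) For a fixed t < 1 and all real u, ũ: φ(u) ≤ φ(ũ) + φ′(ũ)(u − ũ) + (u − ũ)², with equality at u = ũ. -/

import Mathlib

/-- The smooth (Huberized) hinge loss with bend parameter `t`. -/
noncomputable def smoothHinge (t u : ℝ) : ℝ :=
  if u ≤ t then (1 - t)^2 + 2*(1 - t)*(t - u)
  else if u ≤ 1 then (1 - u)^2
  else 0

/-- The derivative of the smooth hinge loss. -/
noncomputable def smoothHinge' (t u : ℝ) : ℝ :=
  if u ≤ t then -2*(1 - t)
  else if u ≤ 1 then -2*(1 - u)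
  else 0

/-!
Writing `c u` for the projection of `u` onto `[t, 1]`, one has `φ u = (1 - u)² - (u - c u)²`
and `φ' u = -2 (1 - c u)`. With these formulas the majorization at `v` becomes
`(u - c v)² ≤ (u - c u)² + (u - v)²`, which follows from the variational inequality
`(v - c v) (c u - c v) ≤ 0` of the projection and `2 a b - b² ≤ a²`.
-/

open Set

namespace Set

variable {a b : ℝ} (h : a ≤ b)

theorem sub_projIcc_mul_sub_projIcc_nonpos (y : ℝ) {z : ℝ} (hz : z ∈ Icc a b) :
    (y - projIcc a b h y) * (z - projIcc a b h y) ≤ 0 := by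
  rcases le_total y a with hya | hay
  · rw [projIcc_of_le_left h hya]
    exact mul_nonpos_of_nonpos_of_nonneg (by simpa using hya) (by simpa using hz.1)
  rcases le_total b y with hby | hyb
  · rw [projIcc_of_right_le h hby]
    exact mul_nonpos_of_nonneg_of_nonpos (by simpa using hby) (by simpa using hz.2)
  · simp [projIcc_of_mem h ⟨hay, hyb⟩]

theorem sq_sub_projIcc_le (x y : ℝ) :
    (x - projIcc a b h y) ^ 2 ≤ (x - projIcc a b h x) ^ 2 + (x - y) ^ 2 := by
  have hvar := sub_projIcc_mul_sub_projIcc_nonpos h y (projIcc a b h x).2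
  nlinarith [sq_nonneg (x - projIcc a b h x - (y - projIcc a b h y))]

end Set

variable {t : ℝ}

theorem smoothHinge_eq_sq_sub_sq (ht : t ≤ 1) (u : ℝ) :
    smoothHinge t u = (1 - u) ^ 2 - (u - projIcc t 1 ht u) ^ 2 := by
  unfold smoothHinge
  split_ifs with hut hu1
  · rw [projIcc_of_le_left ht hut]; ring
  · rw [projIcc_of_mem ht ⟨(not_le.1 hut).le, hu1⟩]; ring
  · rw [projIcc_of_right_le ht (not_le.1 hu1).le]; ring

theorem smoothHinge'_eq (ht : t ≤ 1) (u : ℝ) :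
    smoothHinge' t u = -2 * (1 - projIcc t 1 ht u) := by
  unfold smoothHinge'
  split_ifs with hut hu1
  · rw [projIcc_of_le_left ht hut]
  · rw [projIcc_of_mem ht ⟨(not_le.1 hut).le, hu1⟩]
  · rw [projIcc_of_right_le ht (not_le.1 hu1).le]; ring

theorem smoothHinge_le_quadratic (ht : t ≤ 1) (u v : ℝ) :
    smoothHinge t u ≤ smoothHinge t v + smoothHinge' t v * (u - v) + (u - v) ^ 2 := by
  rw [smoothHinge_eq_sq_sub_sq ht, smoothHinge_eq_sq_sub_sq ht, smoothHinge'_eq ht]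
  linear_combination sq_sub_projIcc_le ht u v

/-- quadratic majorization of the smooth hinge loss: for `t < 1` and all
`u, ũ`, `φ(u) ≤ φ(ũ) + φ′(ũ)(u − ũ) + (u − ũ)²`, with equality at `u = ũ`. -/
theorem stmt_15 (t : ℝ) (ht : t < 1) (u v : ℝ) :
    smoothHinge t u ≤ smoothHinge t v + smoothHinge' t v * (u - v) + (u - v)^2 ∧
    smoothHinge t v = smoothHinge t v + smoothHinge' t v * (v - v) + (v - v)^2 :=
  ⟨smoothHinge_le_quadratic ht.le u v, by ring⟩
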